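/- Fix an integer N≥1, β>0 and ξ∈(0,1), and set z=2N, z'=2N+β−2, θ=2. For a partition λ with at most N nonzero parts put x̃_{N−i+1}(λ)=λ_i−2i+2N for i=1,…,N (so x̃_1<⋯<x̃_N are distinct points of ℤ_{≥0}). Then: (i) M_{z,z',ξ,θ=2}(λ)=0 for every partition λ with more than N nonzero parts; (ii) there is a constant c>0, depending only on N, β, ξ and not on λ, such that for every partition λ with at most N nonzero parts, M_{z,z',ξ,θ=2}(λ) = c·∏_{i=1}^{N} ((β)_{x̃_i}/x̃_i!)·ξ^{x̃_i} · ∏_{1≤i<j≤N} (x̃_i−x̃_j)²((x̃_i−x̃_j)²−1), where (β)_x=β(β+1)⋯(β+x−1). -/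

import Mathlib

open scoped BigOperators
open Polynomial

/-- The multidimensional Pochhammer symbol `(z)_{λ,θ}`. -/
noncomputable def pochP (z : ℂ) (θ : ℝ) (l : YoungDiagram) : ℂ :=
  ∏ c ∈ l.cells, (z + (c.2 : ℂ) - (c.1 : ℂ) * (θ : ℂ))

/-- `H(λ,θ)`. -/
noncomputable def Hfun (l : YoungDiagram) (θ : ℝ) : ℝ :=
  ∏ c ∈ l.cells,
    ((l.rowLen c.1 : ℝ) - ((c.2 : ℝ) + 1) + ((l.colLen c.2 : ℝ) - ((c.1 : ℝ) + 1)) * θ + 1)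

/-- `H'(λ,θ)`. -/
noncomputable def Hfun' (l : YoungDiagram) (θ : ℝ) : ℝ :=
  ∏ c ∈ l.cells,
    ((l.rowLen c.1 : ℝ) - ((c.2 : ℝ) + 1) + ((l.colLen c.2 : ℝ) - ((c.1 : ℝ) + 1)) * θ + θ)

/-- The mixed z-measure `M_{z,z',ξ,θ}(λ)`. -/
noncomputable def zMeasureMix (z z' : ℂ) (ξ θ : ℝ) (l : YoungDiagram) : ℂ :=
  ((1 : ℂ) - (ξ : ℂ)) ^ (z * z' / (θ : ℂ)) * (ξ : ℂ) ^ l.cells.card *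
    pochP z θ l * pochP z' θ l / ((Hfun l θ : ℂ) * (Hfun' l θ : ℂ))

/-- For a diagram `λ` with at most `N` rows, the point
`x̃_{N-i+1} = λ_i - 2i + 2N` (1-based `i = 1,…,N`); in 0-based coordinates, for `k : Fin N`,
`x̃_{k+1} = λ_{N-k} + 2k`. -/
def xPt (N : ℕ) (l : YoungDiagram) (k : Fin N) : ℕ :=
  l.rowLen (N - 1 - (k : ℕ)) + 2 * (k : ℕ)

/-- The Meixner weight `(β)_x ξ^x / x!`. -/
noncomputable def meixnerW (β ξ : ℝ) (x : ℕ) : ℝ :=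
  (ascPochhammer ℝ x).eval β / (Nat.factorial x : ℝ) * ξ ^ x

/-!
Write `x_i = λ_i + m (N - 1 - i)` for a diagram `λ` with at most `N` rows. For `θ = m ∈ ℕ` and
every `a`, the generalized hook product satisfies
`∏_{□ ∈ λ} (arm + m·leg + a) · ∏_{i<k} (x_i - x_k + a - 1)^{(m)} = ∏_i (a)_{x_i}`,
where `y^{(m)} = y (y - 1) ⋯ (y - m + 1)`. Add the rows from the bottom: a new row of length `L`
lengthens by one the legs of the first `L` cells of each row above it, which shifts the falling
factorial of length `L` formed by their hooks by `m`; the new pair factor makes up the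
difference, because both sides are then the falling factorial of length `L + m`.

At `θ = 2` the cases `a = 1` and `a = 2` are `H(λ,2)` and `H'(λ,2)`, and the two pair factors
multiply to `d² (d² - 1)`. Row `i` of `ξ^{|λ|}`, `(2N)_{λ,2}` and `(2N+β-2)_{λ,2}` is `ξ^{λ_i}`,
`(2 + b_i)_{λ_i}` and `(β + b_i)_{λ_i}` with `b_i = 2 (N - 1 - i)`; multiplied by their values at
`λ = ∅` (`symplecticConst`) they become `ξ^{x_i}`, `(2)_{x_i}` and `(β)_{x_i}`. Then `(2)_{x_i}`
cancels against `H'`, and `(1)_{x_i} = x_i!` from `H` is the denominator of the Meixner weight.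
A diagram with more than `N` rows contains the cell `(N, 0)`, whose factor `2N - 2N` kills
`(2N)_{λ,2}`.
-/

open Finset

section Pochhammer

variable {R : Type*}

theorem ascPochhammer_eval_add [CommSemiring R] (n m : ℕ) (a : R) :
    (ascPochhammer R (n + m)).eval a =
      (ascPochhammer R n).eval a * (ascPochhammer R m).eval (a + n) := by
  rw [← ascPochhammer_mul, eval_mul, eval_comp, eval_add, eval_X, eval_natCast]

theorem descPochhammer_eval_add [CommRing R] (n m : ℕ) (r : R) :
    (descPochhammer R (n + m)).eval r =
      (descPochhammer R n).eval r * (descPochhammer R m).eval (r - n) := by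
  rw [← descPochhammer_mul, eval_mul, eval_comp, eval_sub, eval_X, eval_natCast]

theorem ascPochhammer_eval_eq_prod_range [CommSemiring R] (n : ℕ) (a : R) :
    (ascPochhammer R n).eval a = ∏ j ∈ range n, (a + j) := by
  induction n with
  | zero => simp
  | succ n ih => rw [ascPochhammer_succ_eval, prod_range_succ, ih]

theorem ascPochhammer_eval_add_eq_mul_descPochhammer [CommRing R] (n m : ℕ) (a : R) :
    (ascPochhammer R (n + m)).eval a =
      (ascPochhammer R n).eval a * (descPochhammer R m).eval (a + n + m - 1) := by
  rw [ascPochhammer_eval_add, descPochhammer_eval_eq_ascPochhammer]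
  ring_nf

end Pochhammer

section HookFormula

def colCount (N : ℕ) (r : ℕ → ℕ) (j : ℕ) : ℕ := #{i ∈ range N | j < r i}

def shiftedPart (m N : ℕ) (r : ℕ → ℕ) (i : ℕ) : ℕ := r i + m * (N - 1 - i)

def hookRow (m N : ℕ) (r : ℕ → ℕ) (a : ℝ) (i : ℕ) : ℝ :=
  ∏ j ∈ range (r i), ((r i : ℝ) - (j + 1) + ((colCount N r j : ℝ) - (i + 1)) * m + a)

noncomputable def pairRow (m N : ℕ) (r : ℕ → ℕ) (a : ℝ) (i : ℕ) : ℝ :=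
  ∏ k ∈ Ioo i N,
    (descPochhammer ℝ m).eval ((shiftedPart m N r i : ℝ) - shiftedPart m N r k + a - 1)

variable {m N : ℕ} {r : ℕ → ℕ}

theorem colCount_of_lt (hr : Antitone r) {j k : ℕ} (hj : j < r N) (hk : k ≤ N + 1) :
    colCount k r j = k := by
  rw [colCount, filter_true_of_mem, card_range]
  intro i hi
  exact hj.trans_le (hr (by simp at hi; omega))

theorem colCount_succ_of_le {j : ℕ} (hj : r N ≤ j) : colCount (N + 1) r j = colCount N r j := by
  rw [colCount, colCount, range_add_one, filter_insert, if_neg hj.not_gt]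

theorem shiftedPart_cast {i : ℕ} (hi : i < N) :
    (shiftedPart m N r i : ℝ) = r i + m * ((N : ℝ) - 1 - i) := by
  rw [shiftedPart, Nat.sub_sub, Nat.cast_add, Nat.cast_mul, Nat.cast_sub (by omega)]
  push_cast
  ring

theorem shiftedPart_succ_of_lt {i : ℕ} (hi : i < N) :
    shiftedPart m (N + 1) r i = shiftedPart m N r i + m := by
  rw [shiftedPart, shiftedPart, show N + 1 - 1 - i = (N - 1 - i) + 1 by omega]
  ring

theorem shiftedPart_succ_self : shiftedPart m (N + 1) r N = r N := by
  simp [shiftedPart]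

theorem hookRow_succ_self (hr : Antitone r) (a : ℝ) :
    hookRow m (N + 1) r a N = (ascPochhammer ℝ (r N)).eval a := by
  calc hookRow m (N + 1) r a N = ∏ j ∈ range (r N), (a + r N - 1 - j) := by
        refine prod_congr rfl fun j hj => ?_
        rw [colCount_of_lt hr (mem_range.1 hj) le_rfl]
        push_cast
        ring
    _ = (ascPochhammer ℝ (r N)).eval (a + r N - 1 - r N + 1) := by
        rw [← descPochhammer_eval_eq_prod_range, descPochhammer_eval_eq_ascPochhammer]
    _ = (ascPochhammer ℝ (r N)).eval a := by ring_nf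

theorem hookRow_eq_descPochhammer_mul (hr : Antitone r) (a : ℝ) {i k : ℕ} (hi : i < N)
    (hk : k ≤ N + 1) :
    hookRow m k r a i =
      (descPochhammer ℝ (r N)).eval ((r i : ℝ) + ((k : ℝ) - i - 1) * m + a - 1) *
        ∏ j ∈ Ico (r N) (r i), ((r i : ℝ) - (j + 1) + ((colCount k r j : ℝ) - (i + 1)) * m + a) := by
  rw [hookRow, ← prod_range_mul_prod_Ico _ (hr hi.le), descPochhammer_eval_eq_prod_range]
  congr 1
  refine prod_congr rfl fun j hj => ?_
  rw [colCount_of_lt hr (mem_range.1 hj) hk]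
  ring

theorem hookRow_mul_pairRow_succ (hr : Antitone r) (a : ℝ) {i : ℕ} (hi : i < N) :
    hookRow m (N + 1) r a i * pairRow m (N + 1) r a i =
      (descPochhammer ℝ m).eval ((shiftedPart m N r i : ℝ) + m + a - 1) *
        (hookRow m N r a i * pairRow m N r a i) := by
  set B : ℝ := (shiftedPart m N r i : ℝ) + m + a - 1
  set Q := ∏ j ∈ Ico (r N) (r i),
    ((r i : ℝ) - (j + 1) + ((colCount N r j : ℝ) - (i + 1)) * m + a)
  have hB : B = r i + (N - i) * m + a - 1 := by
    simp only [B, shiftedPart_cast hi]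
    ring
  have hook_succ : hookRow m (N + 1) r a i = (descPochhammer ℝ (r N)).eval B * Q := by
    rw [hookRow_eq_descPochhammer_mul hr a hi le_rfl, hB]
    congr 1
    · push_cast
      ring_nf
    · exact prod_congr rfl fun j hj => by rw [colCount_succ_of_le (mem_Ico.1 hj).1]
  have hook : hookRow m N r a i = (descPochhammer ℝ (r N)).eval (B - m) * Q := by
    rw [hookRow_eq_descPochhammer_mul hr a hi N.le_succ, hB]
    congr 2
    ring
  have pair_succ : pairRow m (N + 1) r a i =
      (descPochhammer ℝ m).eval (B - r N) * pairRow m N r a i := by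
    rw [pairRow, pairRow, Ioo_add_one_right_eq_Ioc, ← Ioo_insert_right hi,
      prod_insert right_notMem_Ioo, shiftedPart_succ_of_lt hi, shiftedPart_succ_self]
    push_cast
    congr 1
    · simp only [B]
      ring_nf
    · refine prod_congr rfl fun k hk => ?_
      rw [shiftedPart_succ_of_lt (mem_Ioo.1 hk).2]
      push_cast
      ring_nf
  -- both sides of `key` are the falling factorial of length `r N + m` at `B`
  have key : (descPochhammer ℝ (r N)).eval B * (descPochhammer ℝ m).eval (B - r N) =
      (descPochhammer ℝ m).eval B * (descPochhammer ℝ (r N)).eval (B - m) := by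
    rw [← descPochhammer_eval_add, ← descPochhammer_eval_add, add_comm]
  rw [hook_succ, hook, pair_succ]
  linear_combination Q * pairRow m N r a i * key

theorem prod_hookRow_mul_pairRow (hr : Antitone r) (a : ℝ) :
    ∏ i ∈ range N, hookRow m N r a i * pairRow m N r a i =
      ∏ i ∈ range N, (ascPochhammer ℝ (shiftedPart m N r i)).eval a := by
  induction N with
  | zero => simp
  | succ N ih =>
    have last : pairRow m (N + 1) r a N = 1 := by
      rw [pairRow, Ioo_add_one_right_eq_Ioc, Ioc_self, prod_empty]
    rw [prod_range_succ, prod_range_succ, prod_congr rfl fun i hi =>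
        hookRow_mul_pairRow_succ hr a (mem_range.1 hi), prod_mul_distrib, ih, hookRow_succ_self hr,
      last, mul_one, shiftedPart_succ_self]
    congr 1
    rw [← prod_mul_distrib]
    refine prod_congr rfl fun i hi => ?_
    rw [shiftedPart_succ_of_lt (mem_range.1 hi), ascPochhammer_eval_add_eq_mul_descPochhammer]
    ring_nf

end HookFormula

section YoungDiagram

variable {N : ℕ} {l : YoungDiagram}

theorem YoungDiagram.prod_cells_eq_prod_range {M : Type*} [CommMonoid M] (hl : l.colLen 0 ≤ N)
    (f : ℕ × ℕ → M) :
    ∏ c ∈ l.cells, f c = ∏ i ∈ range N, ∏ j ∈ range (l.rowLen i), f (i, j) := by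
  refine prod_finset_product _ _ _ fun ⟨i, j⟩ => ?_
  simp only [YoungDiagram.mem_cells, mem_range, ← YoungDiagram.mem_iff_lt_rowLen]
  refine ⟨fun h => ⟨?_, h⟩, And.right⟩
  exact (YoungDiagram.mem_iff_lt_colLen.1 (l.up_left_mem le_rfl (Nat.zero_le j) h)).trans_le hl

theorem colCount_rowLen (hl : l.colLen 0 ≤ N) (j : ℕ) : colCount N l.rowLen j = l.colLen j := by
  rw [colCount, ← card_range (l.colLen j)]
  congr 1
  ext i
  simp only [mem_filter, mem_range, ← YoungDiagram.mem_iff_lt_rowLen,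
    YoungDiagram.mem_iff_lt_colLen, and_iff_right_iff_imp]
  exact fun h => h.trans_le ((l.colLen_anti 0 j (Nat.zero_le j)).trans hl)

theorem prod_cells_eq_prod_hookRow (hl : l.colLen 0 ≤ N) (m : ℕ) (a : ℝ) :
    ∏ c ∈ l.cells,
        ((l.rowLen c.1 : ℝ) - ((c.2 : ℝ) + 1) + ((l.colLen c.2 : ℝ) - ((c.1 : ℝ) + 1)) * m + a) =
      ∏ i ∈ range N, hookRow m N l.rowLen a i := by
  rw [YoungDiagram.prod_cells_eq_prod_range hl]
  simp only [hookRow, colCount_rowLen hl]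

theorem prod_cells_add_sub_mul (hl : l.colLen 0 ≤ N) (z θ : ℝ) :
    ∏ c ∈ l.cells, (z + c.2 - c.1 * θ) =
      ∏ i ∈ range N, (ascPochhammer ℝ (l.rowLen i)).eval (z - i * θ) := by
  rw [YoungDiagram.prod_cells_eq_prod_range hl]
  simp only [ascPochhammer_eval_eq_prod_range]
  exact prod_congr rfl fun i _ => prod_congr rfl fun j _ => by ring

theorem pochP_ofReal (z θ : ℝ) (l : YoungDiagram) :
    pochP z θ l = ((∏ c ∈ l.cells, (z + c.2 - c.1 * θ) : ℝ) : ℂ) := by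
  rw [pochP, Complex.ofReal_prod]
  push_cast
  rfl

theorem pochP_natCast_mul_eq_zero (θ : ℝ) (hN : N < l.colLen 0) : pochP (N * θ) θ l = 0 :=
  prod_eq_zero (YoungDiagram.mem_iff_lt_colLen.2 hN) (by push_cast; ring)

theorem zMeasureMix_ofReal (z z' : ℝ) {ξ : ℝ} (hξ : ξ ≤ 1) (θ : ℝ) (l : YoungDiagram) :
    zMeasureMix z z' ξ θ l =
      (((1 - ξ) ^ (z * z' / θ) * ξ ^ #l.cells * (∏ c ∈ l.cells, (z + c.2 - c.1 * θ)) *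
        (∏ c ∈ l.cells, (z' + c.2 - c.1 * θ)) / (Hfun l θ * Hfun' l θ) : ℝ) : ℂ) := by
  rw [zMeasureMix, pochP_ofReal, pochP_ofReal, ← Complex.ofReal_one, ← Complex.ofReal_sub,
    ← Complex.ofReal_mul, ← Complex.ofReal_div, ← Complex.ofReal_cpow (by linarith)]
  push_cast
  rfl

end YoungDiagram

section FinReindexing

variable {M : Type*} [CommMonoid M] {N : ℕ}

theorem prod_fin_sub_one_sub (f : ℕ → M) : ∏ k : Fin N, f (N - 1 - k) = ∏ i ∈ range N, f i := by
  rw [Fin.prod_univ_eq_prod_range (fun k => f (N - 1 - k)), prod_range_reflect]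

theorem prod_fin_lt_sub_one_sub (f : ℕ → ℕ → M) :
    ∏ p ∈ univ.filter (fun p : Fin N × Fin N => p.1 < p.2), f (N - 1 - p.1) (N - 1 - p.2) =
      ∏ i ∈ range N, ∏ k ∈ Ioo i N, f k i := by
  rw [prod_sigma']
  refine prod_bij' (fun p _ => ⟨N - 1 - p.2, N - 1 - p.1⟩)
    (fun q hq => (⟨N - 1 - q.2, by grind⟩, ⟨N - 1 - q.1, by grind⟩)) ?_ ?_ ?_ ?_ ?_ <;>
  grind

end FinReindexing

section MeixnerSymplectic

variable {N : ℕ} {l : YoungDiagram}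

theorem Hfun_mul_prod_pairRow (hl : l.colLen 0 ≤ N) (m : ℕ) :
    Hfun l m * ∏ i ∈ range N, pairRow m N l.rowLen 1 i =
      ∏ i ∈ range N, (ascPochhammer ℝ (shiftedPart m N l.rowLen i)).eval 1 := by
  rw [← prod_hookRow_mul_pairRow (fun _ _ h => l.rowLen_anti _ _ h), prod_mul_distrib,
    ← prod_cells_eq_prod_hookRow hl]
  rfl

theorem Hfun'_mul_prod_pairRow (hl : l.colLen 0 ≤ N) (m : ℕ) :
    Hfun' l m * ∏ i ∈ range N, pairRow m N l.rowLen m i =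
      ∏ i ∈ range N, (ascPochhammer ℝ (shiftedPart m N l.rowLen i)).eval (m : ℝ) := by
  rw [← prod_hookRow_mul_pairRow (fun _ _ h => l.rowLen_anti _ _ h), prod_mul_distrib,
    ← prod_cells_eq_prod_hookRow hl]
  rfl

noncomputable def symplecticConst (N : ℕ) (β ξ : ℝ) : ℝ :=
  ∏ i ∈ range N, (ξ ^ (2 * (N - 1 - i)) * (ascPochhammer ℝ (2 * (N - 1 - i))).eval 2 *
    (ascPochhammer ℝ (2 * (N - 1 - i))).eval β)

theorem symplecticConst_pos {β ξ : ℝ} (hβ : 0 < β) (hξ : 0 < ξ) : 0 < symplecticConst N β ξ :=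
  prod_pos fun i _ => by
    have := ascPochhammer_pos (2 * (N - 1 - i)) (2 : ℝ) two_pos
    have := ascPochhammer_pos (2 * (N - 1 - i)) β hβ
    positivity

theorem pow_mul_ascPochhammer_add_eq_meixnerW (β ξ : ℝ) (r b : ℕ) :
    ξ ^ r * (ascPochhammer ℝ r).eval (2 + b : ℝ) * (ascPochhammer ℝ r).eval (β + b) *
        (ξ ^ b * (ascPochhammer ℝ b).eval 2 * (ascPochhammer ℝ b).eval β) =
      meixnerW β ξ (r + b) *
        ((ascPochhammer ℝ (r + b)).eval 1 * (ascPochhammer ℝ (r + b)).eval 2) := by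
  have hfac : ((r + b).factorial : ℝ) ≠ 0 := by positivity
  rw [meixnerW, ascPochhammer_eval_one, add_comm r b, ascPochhammer_eval_add,
    ascPochhammer_eval_add, pow_add]
  field_simp

theorem pow_card_mul_prod_cells_mul_symplecticConst (hl : l.colLen 0 ≤ N) (β ξ : ℝ) :
    ξ ^ #l.cells * (∏ c ∈ l.cells, (((2 * N : ℕ) : ℝ) + c.2 - c.1 * 2)) *
        (∏ c ∈ l.cells, ((2 * N + β - 2) + c.2 - c.1 * 2)) * symplecticConst N β ξ =
      (∏ i ∈ range N, meixnerW β ξ (shiftedPart 2 N l.rowLen i)) *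
        ((∏ i ∈ range N, (ascPochhammer ℝ (shiftedPart 2 N l.rowLen i)).eval 1) *
          ∏ i ∈ range N, (ascPochhammer ℝ (shiftedPart 2 N l.rowLen i)).eval 2) := by
  rw [← prod_const, YoungDiagram.prod_cells_eq_prod_range hl, prod_cells_add_sub_mul hl,
    prod_cells_add_sub_mul hl, symplecticConst, ← prod_mul_distrib, ← prod_mul_distrib,
    ← prod_mul_distrib, ← prod_mul_distrib, ← prod_mul_distrib]
  refine prod_congr rfl fun i hi => ?_
  have hb : ((2 * (N - 1 - i) : ℕ) : ℝ) = 2 * N - 2 - i * 2 := by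
    rw [Nat.cast_mul, Nat.sub_sub, Nat.cast_sub (by simp at hi; omega)]
    push_cast
    ring
  rw [shiftedPart, ← pow_mul_ascPochhammer_add_eq_meixnerW, prod_const, card_range, hb]
  push_cast
  ring_nf

theorem pow_card_mul_prod_cells_div_Hfun_mul_Hfun' (hl : l.colLen 0 ≤ N) {β ξ : ℝ}
    (hβ : 0 < β) (hξ : 0 < ξ) :
    ξ ^ #l.cells * (∏ c ∈ l.cells, (((2 * N : ℕ) : ℝ) + c.2 - c.1 * 2)) *
        (∏ c ∈ l.cells, ((2 * N + β - 2) + c.2 - c.1 * 2)) / (Hfun l 2 * Hfun' l 2) =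
      (symplecticConst N β ξ)⁻¹ * (∏ i ∈ range N, meixnerW β ξ (shiftedPart 2 N l.rowLen i)) *
        ∏ i ∈ range N, (pairRow 2 N l.rowLen 1 i * pairRow 2 N l.rowLen 2 i) := by
  have hpos (a : ℝ) (ha : 0 < a) :
      ∏ i ∈ range N, (ascPochhammer ℝ (shiftedPart 2 N l.rowLen i)).eval a ≠ 0 :=
    prod_ne_zero_iff.2 fun i _ => (ascPochhammer_pos _ a ha).ne'
  have hH := Hfun_mul_prod_pairRow hl 2
  have hH' := Hfun'_mul_prod_pairRow hl 2
  rw [Nat.cast_ofNat] at hH hH'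
  have hH0 : Hfun l 2 ≠ 0 := left_ne_zero_of_mul (hH ▸ hpos 1 one_pos)
  have hH'0 : Hfun' l 2 ≠ 0 := left_ne_zero_of_mul (hH' ▸ hpos 2 two_pos)
  have hnum := pow_card_mul_prod_cells_mul_symplecticConst hl β ξ
  rw [← hH, ← hH', ← eq_mul_inv_iff_mul_eq₀ (symplecticConst_pos hβ hξ).ne'] at hnum
  rw [hnum, prod_mul_distrib]
  field_simp

theorem xPt_eq_shiftedPart (k : Fin N) : xPt N l k = shiftedPart 2 N l.rowLen (N - 1 - k) := by
  rw [xPt, shiftedPart, Nat.sub_sub_self (by omega)]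

theorem prod_meixnerW_xPt (β ξ : ℝ) :
    ∏ k : Fin N, meixnerW β ξ (xPt N l k) =
      ∏ i ∈ range N, meixnerW β ξ (shiftedPart 2 N l.rowLen i) := by
  simp only [xPt_eq_shiftedPart]
  exact prod_fin_sub_one_sub fun i => meixnerW β ξ (shiftedPart 2 N l.rowLen i)

theorem prod_xPt_pairs :
    ∏ p ∈ univ.filter (fun p : Fin N × Fin N => p.1 < p.2),
        (((xPt N l p.1 : ℝ) - xPt N l p.2) ^ 2 * (((xPt N l p.1 : ℝ) - xPt N l p.2) ^ 2 - 1)) =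
      ∏ i ∈ range N, (pairRow 2 N l.rowLen 1 i * pairRow 2 N l.rowLen 2 i) := by
  simp only [xPt_eq_shiftedPart, pairRow, ← prod_mul_distrib]
  rw [prod_fin_lt_sub_one_sub fun u v => (((shiftedPart 2 N l.rowLen u : ℝ) -
    shiftedPart 2 N l.rowLen v) ^ 2 * (((shiftedPart 2 N l.rowLen u : ℝ) -
    shiftedPart 2 N l.rowLen v) ^ 2 - 1))]
  refine prod_congr rfl fun i _ => prod_congr rfl fun k _ => ?_
  simp only [descPochhammer_eval_eq_prod_range, prod_range_succ, prod_range_zero]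
  ring

end MeixnerSymplectic

theorem zMeasureMix_eq_meixnerSymplectic_general (N : ℕ) (β ξ : ℝ)
    (hβ : 0 < β) (hξ0 : 0 < ξ) (hξ1 : ξ < 1) :
    (∀ l : YoungDiagram, N < l.colLen 0 →
      zMeasureMix ((2 * N : ℕ) : ℂ) ((2 * N : ℂ) + (β : ℂ) - 2) ξ 2 l = 0) ∧
    ∃ c : ℝ, 0 < c ∧ ∀ l : YoungDiagram, l.colLen 0 ≤ N →
      zMeasureMix ((2 * N : ℕ) : ℂ) ((2 * N : ℂ) + (β : ℂ) - 2) ξ 2 l =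
        ((c * (∏ k : Fin N, meixnerW β ξ (xPt N l k)) *
          ∏ p ∈ Finset.univ.filter (fun p : Fin N × Fin N => p.1 < p.2),
            (((xPt N l p.1 : ℝ) - (xPt N l p.2 : ℝ)) ^ 2 *
              (((xPt N l p.1 : ℝ) - (xPt N l p.2 : ℝ)) ^ 2 - 1)) : ℝ) : ℂ) := by
  refine ⟨fun l hl => ?_, ?_⟩
  · rw [zMeasureMix, show ((2 * N : ℕ) : ℂ) = (N : ℂ) * ((2 : ℝ) : ℂ) by push_cast; ring,
      pochP_natCast_mul_eq_zero 2 hl]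
    simp
  refine ⟨(1 - ξ) ^ (((2 * N : ℕ) : ℝ) * (2 * N + β - 2) / 2) / symplecticConst N β ξ,
    div_pos (Real.rpow_pos_of_pos (by linarith) _) (symplecticConst_pos hβ hξ0), fun l hl => ?_⟩
  rw [← Complex.ofReal_natCast, show (2 * N : ℂ) + (β : ℂ) - 2 = ((2 * N + β - 2 : ℝ) : ℂ) by
      push_cast; ring, zMeasureMix_ofReal _ _ hξ1.le, prod_meixnerW_xPt, prod_xPt_pairs,
    Complex.ofReal_inj, mul_assoc _ (ξ ^ _), mul_assoc _ (_ * _), mul_div_assoc,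
    pow_card_mul_prod_cells_div_Hfun_mul_Hfun' hl hβ hξ0]
  ring

/-- With `z = 2N`, `z' = 2N + β - 2`, `θ = 2`, the mixed z-measure vanishes on diagrams
with more than `N` rows and on diagrams with at most `N` rows it is, up to a positive
constant, the `N`-point Meixner symplectic ensemble. -/
theorem zMeasureMix_eq_meixnerSymplectic (N : ℕ) (hN : 1 ≤ N) (β ξ : ℝ)
    (hβ : 0 < β) (hξ0 : 0 < ξ) (hξ1 : ξ < 1) :
    (∀ l : YoungDiagram, N < l.colLen 0 →
      zMeasureMix ((2 * N : ℕ) : ℂ) ((2 * N : ℂ) + (β : ℂ) - 2) ξ 2 l = 0) ∧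
    ∃ c : ℝ, 0 < c ∧ ∀ l : YoungDiagram, l.colLen 0 ≤ N →
      zMeasureMix ((2 * N : ℕ) : ℂ) ((2 * N : ℂ) + (β : ℂ) - 2) ξ 2 l =
        ((c * (∏ k : Fin N, meixnerW β ξ (xPt N l k)) *
          ∏ p ∈ Finset.univ.filter (fun p : Fin N × Fin N => p.1 < p.2),
            (((xPt N l p.1 : ℝ) - (xPt N l p.2 : ℝ)) ^ 2 *
              (((xPt N l p.1 : ℝ) - (xPt N l p.2 : ℝ)) ^ 2 - 1)) : ℝ) : ℂ) :=
  zMeasureMix_eq_meixnerSymplectic_general N β ξ hβ hξ0 hξ1
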